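/- Each step of the Goodstein process strictly decreases the associated ordinal: for every natural number b ≥ 2 and every natural number m ≥ 1, O(b+1, B(b, m) − 1) < O(b, m). -/

import Mathlib

/-- `hsub b u m` substitutes the value `u` for the base `b` throughout the
hereditary base-`b` representation of `m` (with `hsub b u 0 = 0`). -/
def hsub (b u : ℕ) (m : ℕ) : ℕ :=
  if m = 0 then 0
  else
    u ^ hsub b u (Nat.log b m) * (m / b ^ Nat.log b m) + hsub b u (m % b ^ Nat.log b m)
termination_by m
decreasing_by
  · exact Nat.log_lt_self b (by assumption)
  · have hpos : 0 < b ^ Nat.log b m := by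
      rcases Nat.eq_zero_or_pos b with hb | hb
      · simp [hb]
      · exact pow_pos hb _
    exact lt_of_lt_of_le (Nat.mod_lt _ hpos) (Nat.pow_log_le_self b (by assumption))

/-- Goodstein's base-change ("bumping") function: replace the base `b` by `b + 1`
throughout the hereditary base-`b` representation of `m` (with `B b 0 = 0`). -/
def B (b m : ℕ) : ℕ := hsub b (b + 1) m

/-- The Goodstein sequence of `m`: `G 1 m = m`, and `G (k+1) m = B (k+1) (G k m) - 1`
for `k ≥ 1` (truncated subtraction), so the `k`-th term is written in hereditary
base `k + 1`. -/
def G : ℕ → ℕ → ℕ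
  | 0, m => m
  | 1, m => m
  | (k + 2), m => B (k + 2) (G (k + 1) m) - 1

/-- The auxiliary Goodstein-type sequence: `L 1 k = k ^ k` (written in hereditary
base `k`), and `L (n+1) k = B (k+n-1) (L n k) - 1` for `n ≥ 1` (truncated
subtraction), so the `n`-th term is written in hereditary base `k + n - 1`. -/
def L : ℕ → ℕ → ℕ
  | 0, k => k ^ k
  | 1, k => k ^ k
  | (n + 2), k => B (k + n) (L (n + 1) k) - 1

/-- `O b m` is the ordinal obtained by substituting `ω` for the base `b`
throughout the hereditary base-`b` representation of `m` (with `O b 0 = 0`). -/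
noncomputable def O (b : ℕ) (m : ℕ) : Ordinal :=
  if m = 0 then 0
  else
    Ordinal.omega0 ^ O b (Nat.log b m) * ((m / b ^ Nat.log b m : ℕ) : Ordinal)
      + O b (m % b ^ Nat.log b m)
termination_by m
decreasing_by
  · exact Nat.log_lt_self b (by assumption)
  · have hpos : 0 < b ^ Nat.log b m := by
      rcases Nat.eq_zero_or_pos b with hb | hb
      · simp [hb]
      · exact pow_pos hb _
    exact lt_of_lt_of_le (Nat.mod_lt _ hpos) (Nat.pow_log_le_self b (by assumption))

/-!
Substituting an ordinal `x ≥ b` for the base `b` in hereditary base-`b` notation is strictly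
monotone, and every `m < b ^ n` is sent below `x ^ (image of n)`; the two facts feed each other
in one strong induction, via the Cantor-normal-form estimate `x ^ a * d + y < x ^ c` for
`d < x`, `y < x ^ a`, `a < c`. Taking `x = ω` gives `O b`, taking `x = b + 1` gives `B b`.
The latter bound shows that bumping the base keeps a hereditary base-`(b+1)` representation
with the same digits, so `O (b + 1) (B b m) = O b m`, and monotonicity of `O (b + 1)` finishes.
-/

open Ordinal

namespace Nat

theorem div_pow_log_pos (b : ℕ) {m : ℕ} (hm : m ≠ 0) : 0 < m / b ^ log b m := by
  obtain rfl | hb := b.eq_zero_or_pos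
  · simpa using Nat.pos_of_ne_zero hm
  · exact Nat.div_pos (pow_log_le_self b hm) (pow_pos hb _)

theorem div_pow_log_lt {b : ℕ} (hb : 1 < b) (m : ℕ) : m / b ^ log b m < b := by
  rw [Nat.div_lt_iff_lt_mul (pow_pos (by omega) _), ← pow_succ']
  exact lt_pow_succ_log_self hb m

theorem mod_pow_log_lt_self {b : ℕ} (hb : 0 < b) {m : ℕ} (hm : m ≠ 0) : m % b ^ log b m < m :=
  (Nat.mod_lt _ (pow_pos hb _)).trans_le (pow_log_le_self b hm)

theorem pow_mul_add_div {u e d r : ℕ} (hr : r < u ^ e) : (u ^ e * d + r) / u ^ e = d := by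
  rw [Nat.mul_add_div (by omega), Nat.div_eq_of_lt hr, add_zero]

theorem pow_mul_add_mod {u e d r : ℕ} (hr : r < u ^ e) : (u ^ e * d + r) % u ^ e = r := by
  rw [Nat.mul_add_mod, Nat.mod_eq_of_lt hr]

theorem log_pow_mul_add {u e d r : ℕ} (hd₀ : 0 < d) (hd : d < u) (hr : r < u ^ e) :
    log u (u ^ e * d + r) = e := by
  apply log_eq_of_pow_le_of_lt_pow
  · exact (Nat.le_mul_of_pos_right _ hd₀).trans (le_add_right _ _)
  · calc u ^ e * d + r < u ^ e * (d + 1) := by rw [mul_add_one]; omega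
      _ ≤ u ^ e * u := Nat.mul_le_mul_left _ hd
      _ = u ^ (e + 1) := (pow_succ u e).symm

end Nat

/-- `f m` is the value of the hereditary base-`b` representation of `m` with `x` substituted
for `b`. -/
structure IsHereditarySubst (b : ℕ) (x : Ordinal) (f : ℕ → Ordinal) : Prop where
  map_zero : f 0 = 0
  eq_of_ne_zero : ∀ m ≠ 0,
    f m = x ^ f (Nat.log b m) * (m / b ^ Nat.log b m : ℕ) + f (m % b ^ Nat.log b m)

namespace IsHereditarySubst

variable {b : ℕ} {x : Ordinal} {f : ℕ → Ordinal}

theorem opow_log_le (hf : IsHereditarySubst b x f) {n : ℕ} (hn : n ≠ 0) :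
    x ^ f (Nat.log b n) ≤ f n := by
  rw [hf.eq_of_ne_zero n hn]
  refine le_trans ?_ le_self_add
  exact le_mul_left _ (by exact_mod_cast Nat.div_pow_log_pos b hn)

theorem lt_of_lt (hf : IsHereditarySubst b x f) (hb : 2 ≤ b) (hbx : (b : Ordinal) ≤ x)
    {n : ℕ} (hlt : ∀ e < n, ∀ r < b ^ e, f r < x ^ f e) (hmono : ∀ k < n, ∀ m < k, f m < f k)
    {m : ℕ} (hmn : m < n) : f m < f n := by
  have hn₀ : n ≠ 0 := by omega
  have hx : 0 < x := lt_of_lt_of_le (by exact_mod_cast (show 0 < b by omega)) hbx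
  have hlog_lt : Nat.log b n < n := Nat.log_lt_self b hn₀
  obtain rfl | hm₀ := eq_or_ne m 0
  · rw [hf.map_zero]
    exact (opow_pos _ hx).trans_le (hf.opow_log_le hn₀)
  obtain hlog | hlog := (Nat.log_mono_right hmn.le).lt_or_eq
  · have hm : m < b ^ Nat.log b n :=
      (Nat.lt_pow_succ_log_self (by omega) m).trans_le (Nat.pow_le_pow_right (by omega) hlog)
    exact (hlt _ hlog_lt m hm).trans_le (hf.opow_log_le hn₀)
  set e := Nat.log b n
  have hr : f (m % b ^ e) < x ^ f e := hlt e hlog_lt _ (Nat.mod_lt _ (by positivity))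
  rw [hf.eq_of_ne_zero m hm₀, hf.eq_of_ne_zero n hn₀, hlog]
  obtain hd | hd := (Nat.div_le_div_right (c := b ^ e) hmn.le).lt_or_eq
  · exact (opow_mul_add_lt_opow_mul hr (Nat.cast_lt.2 hd)).trans_le le_self_add
  · have hmod : m % b ^ e < n % b ^ e := by
      have := Nat.div_add_mod m (b ^ e)
      have := Nat.div_add_mod n (b ^ e)
      rw [hd] at *
      omega
    rw [hd]
    exact add_lt_add_right (hmono _ (Nat.mod_pow_log_lt_self (by omega) hn₀) _ hmod) _

theorem lt_opow_of_lt_pow (hf : IsHereditarySubst b x f) (hb : 2 ≤ b) (hbx : (b : Ordinal) ≤ x)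
    {n : ℕ} (hmono : ∀ e < n, f e < f n) (hlt : ∀ e < n, ∀ r < b ^ e, f r < x ^ f e)
    {m : ℕ} (hm : m < b ^ n) : f m < x ^ f n := by
  obtain rfl | hm₀ := eq_or_ne m 0
  · rw [hf.map_zero]
    exact opow_pos _ (lt_of_lt_of_le (by exact_mod_cast (show 0 < b by omega)) hbx)
  have hlog : Nat.log b m < n := Nat.log_lt_of_lt_pow hm₀ hm
  rw [hf.eq_of_ne_zero m hm₀]
  refine opow_mul_add_lt_opow ?_ (hlt _ hlog _ (Nat.mod_lt _ (by positivity))) (hmono _ hlog)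
  exact (Nat.cast_lt.2 (Nat.div_pow_log_lt (by omega) m)).trans_le hbx

theorem strictMono_and_lt_opow (hf : IsHereditarySubst b x f) (hb : 2 ≤ b)
    (hbx : (b : Ordinal) ≤ x) (n : ℕ) :
    (∀ m < n, f m < f n) ∧ ∀ m < b ^ n, f m < x ^ f n := by
  induction n using Nat.strong_induction_on with
  | _ n ih =>
    have hmono : ∀ m < n, f m < f n := fun m ↦
      hf.lt_of_lt hb hbx (fun e he ↦ (ih e he).2) fun k hk ↦ (ih k hk).1
    exact ⟨hmono, fun m ↦ hf.lt_opow_of_lt_pow hb hbx hmono fun e he ↦ (ih e he).2⟩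

theorem strictMono (hf : IsHereditarySubst b x f) (hb : 2 ≤ b) (hbx : (b : Ordinal) ≤ x) :
    StrictMono f :=
  fun m n hmn ↦ (hf.strictMono_and_lt_opow hb hbx n).1 m hmn

theorem lt_opow (hf : IsHereditarySubst b x f) (hb : 2 ≤ b) (hbx : (b : Ordinal) ≤ x)
    {m n : ℕ} (hm : m < b ^ n) : f m < x ^ f n :=
  (hf.strictMono_and_lt_opow hb hbx n).2 m hm

end IsHereditarySubst

theorem isHereditarySubst_O (b : ℕ) : IsHereditarySubst b ω (O b) where
  map_zero := by rw [O]; simp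
  eq_of_ne_zero m hm := by rw [O]; simp [hm]

theorem hsub_zero (b u : ℕ) : hsub b u 0 = 0 := by
  rw [hsub]; simp

theorem hsub_of_ne_zero (b u : ℕ) {m : ℕ} (hm : m ≠ 0) :
    hsub b u m = u ^ hsub b u (Nat.log b m) * (m / b ^ Nat.log b m)
      + hsub b u (m % b ^ Nat.log b m) := by
  rw [hsub]; simp [hm]

theorem isHereditarySubst_hsub (b u : ℕ) :
    IsHereditarySubst b u fun m ↦ (hsub b u m : Ordinal) where
  map_zero := by simp [hsub_zero]
  eq_of_ne_zero m hm := by simp [hsub_of_ne_zero b u hm, natCast_pow, opow_natCast]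

section BaseChange

variable {b u : ℕ}

theorem hsub_strictMono (hb : 2 ≤ b) (hbu : b ≤ u) : StrictMono (hsub b u) := fun _ _ h ↦ by
  exact_mod_cast (isHereditarySubst_hsub.{0} b u).strictMono hb (by exact_mod_cast hbu) h

theorem hsub_lt_pow (hb : 2 ≤ b) (hbu : b ≤ u) {m n : ℕ} (hm : m < b ^ n) :
    hsub b u m < u ^ hsub b u n := by
  have := (isHereditarySubst_hsub.{0} b u).lt_opow hb (by exact_mod_cast hbu) hm
  rwa [opow_natCast, ← natCast_pow, Nat.cast_lt] at this

theorem O_hsub (hb : 2 ≤ b) (hbu : b ≤ u) (m : ℕ) : O u (hsub b u m) = O b m := by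
  induction m using Nat.strong_induction_on with
  | _ m ih =>
    obtain rfl | hm₀ := eq_or_ne m 0
    · rw [hsub_zero, (isHereditarySubst_O u).map_zero, (isHereditarySubst_O b).map_zero]
    set e := Nat.log b m
    have hd₀ : 0 < m / b ^ e := Nat.div_pow_log_pos b hm₀
    have hd : m / b ^ e < u := (Nat.div_pow_log_lt (by omega) m).trans_le hbu
    have hr : hsub b u (m % b ^ e) < u ^ hsub b u e :=
      hsub_lt_pow hb hbu (Nat.mod_lt _ (by positivity))
    have hu : 0 < u := by omega
    rw [hsub_of_ne_zero b u hm₀, (isHereditarySubst_O u).eq_of_ne_zero _ (by positivity),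
      Nat.log_pow_mul_add hd₀ hd hr, Nat.pow_mul_add_div hr, Nat.pow_mul_add_mod hr,
      ih _ (Nat.log_lt_self b hm₀), ih _ (Nat.mod_pow_log_lt_self (by omega) hm₀),
      (isHereditarySubst_O b).eq_of_ne_zero m hm₀]

end BaseChange

/-- Each step of the Goodstein process strictly decreases the associated
ordinal: for every `b ≥ 2` and every `m ≥ 1`, `O (b+1) (B b m - 1) < O b m`. -/
theorem goodstein_step_ordinal_decreases (b m : ℕ) (hb : 2 ≤ b) (hm : 1 ≤ m) :
    O (b + 1) (B b m - 1) < O b m := by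
  have hbump : 0 < B b m := by
    simpa [B, hsub_zero] using hsub_strictMono hb b.le_succ (show 0 < m by omega)
  have hω : ((b + 1 : ℕ) : Ordinal) ≤ ω := (natCast_lt_omega0 _).le
  calc O (b + 1) (B b m - 1) < O (b + 1) (B b m) :=
        (isHereditarySubst_O (b + 1)).strictMono (by omega) hω (Nat.sub_lt hbump one_pos)
    _ = O b m := O_hsub hb b.le_succ m
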